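/- arXiv:1010.0457 — 3 statements merged into one kernel-verified Lean document; each statement's English description precedes it below -/
import Mathlib

section
/- Let S = K[x_1,...,x_n] and let J ⊆ S be a saturated strongly stable monomial ideal. Writing S̄ = K[x_1,...,x_{n-1}] and J̄ = J ∩ S̄, one has dim_K J_d = Σ_{k=0}^{d} dim_K J̄_k for all d ≥ 0. -/
open MvPolynomial

def IsMonomialIdeal {n : ℕ} {K : Type} [Field K] (J : Ideal (MvPolynomial (Fin n) K)) : Prop :=
  ∀ f ∈ J, ∀ m ∈ f.support, (monomial m (1 : K) : MvPolynomial (Fin n) K) ∈ J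

def StronglyStable {n : ℕ} {K : Type} [Field K] (J : Ideal (MvPolynomial (Fin n) K)) : Prop :=
  IsMonomialIdeal J ∧
  ∀ m : Fin n →₀ ℕ, (monomial m (1 : K) : MvPolynomial (Fin n) K) ∈ J →
    ∀ j i : Fin n, i < j → m j ≠ 0 →
      (monomial (m - Finsupp.single j 1 + Finsupp.single i 1) (1 : K) : MvPolynomial (Fin n) K) ∈ J

def Saturated {n : ℕ} {K : Type} [Field K] (J : Ideal (MvPolynomial (Fin n) K)) : Prop :=
  ∀ f : MvPolynomial (Fin n) K, (∃ k : ℕ, ∀ i : Fin n, (X i) ^ k * f ∈ J) → f ∈ J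

/-- The degree-`d` graded piece `J_d` of an ideal, as a `K`-subspace. -/
noncomputable def gradedPiece {n : ℕ} {K : Type} [Field K] (J : Ideal (MvPolynomial (Fin n) K))
    (d : ℕ) : Submodule K (MvPolynomial (Fin n) K) :=
  (Submodule.restrictScalars K J) ⊓ homogeneousSubmodule (Fin n) K d

/-- The degree-`k` graded piece of `J̄ = J ∩ K[x_1,…,x_n]` (polynomials of `J` supported away
from the last variable), as a `K`-subspace. -/
noncomputable def gradedPieceBar {n : ℕ} {K : Type} [Field K]
    (J : Ideal (MvPolynomial (Fin (n + 1)) K)) (k : ℕ) :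
    Submodule K (MvPolynomial (Fin (n + 1)) K) :=
  (Submodule.restrictScalars K J) ⊓ homogeneousSubmodule (Fin (n + 1)) K k ⊓
    (MvPolynomial.supported K {i : Fin (n + 1) | i ≠ Fin.last n}).toSubmodule

/-! Saturation and strong stability together make the last variable harmless: if
`u · x_{n+1}^e ∈ J`, then moving the exponent `e` onto any other variable keeps the monomial
in `J`, so `x_i^e · u ∈ J` for every `i`, and `u ∈ J` by saturation. Hence a monomial lies in `J`
exactly when its `x_{n+1}`-free part lies in `J̄`, and `u ↦ u · x_{n+1}^{d-k}` is a bijection from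
the monomials of `J̄` of degree `k ≤ d` onto those of `J` of degree `d`. Since `J` is a monomial
ideal, its graded pieces have the monomials they contain as bases, so counting monomials counts
dimensions. -/

theorem Set.ncard_inter_setOf_le_eq_sum {α : Type*} {s : Set α} {f : α → ℕ} {d : ℕ}
    (hs : ({x | f x ≤ d} ∩ s).Finite) :
    ({x | f x ≤ d} ∩ s).ncard = ∑ k ∈ Finset.range (d + 1), ({x | f x = k} ∩ s).ncard := by
  induction d with
  | zero =>
    simp only [nonpos_iff_eq_zero, zero_add, Finset.sum_range_one]
  | succ d ih =>
    have hle : {x | f x ≤ d} ∩ s ⊆ {x | f x ≤ d + 1} ∩ s :=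
      Set.inter_subset_inter_left _ fun x (hx : f x ≤ d) => Nat.le_succ_of_le hx
    have hsplit : {x | f x ≤ d + 1} ∩ s = ({x | f x ≤ d} ∩ s) ∪ ({x | f x = d + 1} ∩ s) := by
      rw [← Set.union_inter_distrib_right]
      congr 1
      ext x
      simp only [Set.mem_union, Set.mem_ofPred_eq]
      omega
    have hdisj : Disjoint ({x | f x ≤ d} ∩ s) ({x | f x = d + 1} ∩ s) :=
      Set.disjoint_left.2 fun x hx hx' => by
        simp only [Set.mem_inter_iff, Set.mem_ofPred_eq] at hx hx'
        omega
    rw [Finset.sum_range_succ, ← ih (hs.subset hle), hsplit,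
      Set.ncard_union_eq hdisj (hs.subset hle) (hs.subset (hsplit ▸ Set.subset_union_right))]

namespace Finsupp

variable {σ : Type*}

theorem degree_erase_add_apply (a : σ) (m : σ →₀ ℕ) : (m.erase a).degree + m a = m.degree := by
  rw [← degree_single a (m a), ← map_add, erase_add_single]

theorem ncard_degree_eq_inter_eq_ncard_degree_le {E : Set (σ →₀ ℕ)} (a : σ)
    (hE : ∀ m, m ∈ E ↔ m.erase a ∈ E) (d : ℕ) :
    ({m | m.degree = d} ∩ E).ncard = ({m | m.degree ≤ d} ∩ ({m | m a = 0} ∩ E)).ncard := by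
  refine Set.ncard_congr (fun m _ => m.erase a) ?_ ?_ ?_
  · rintro m ⟨hdeg, hm⟩
    have := degree_erase_add_apply a m
    exact ⟨by simp only [Set.mem_ofPred_eq] at hdeg ⊢; omega, erase_same, (hE m).1 hm⟩
  · rintro m₁ m₂ ⟨hdeg₁, -⟩ ⟨hdeg₂, -⟩ heq
    have h₁ := degree_erase_add_apply a m₁
    have h₂ := degree_erase_add_apply a m₂
    rw [heq] at h₁
    rw [← erase_add_single a m₁, ← erase_add_single a m₂, heq]
    congr 2
    simp only [Set.mem_ofPred_eq] at hdeg₁ hdeg₂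
    omega
  · rintro m ⟨hdeg, hma, hm⟩
    have herase : (m + single a (d - m.degree)).erase a = m := by
      rw [erase_add, erase_single, add_zero, erase_of_notMem_support (by simpa using hma)]
    refine ⟨m + single a (d - m.degree), ⟨?_, ?_⟩, herase⟩
    · simp only [Set.mem_ofPred_eq, map_add, degree_single] at hdeg ⊢
      omega
    · rwa [hE, herase]

theorem ncard_degree_eq_inter_eq_sum [Finite σ] {E : Set (σ →₀ ℕ)} (a : σ)
    (hE : ∀ m, m ∈ E ↔ m.erase a ∈ E) (d : ℕ) :
    ({m | m.degree = d} ∩ E).ncard =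
      ∑ k ∈ Finset.range (d + 1), ({m | m.degree = k} ∩ {m | m a = 0} ∩ E).ncard := by
  rw [ncard_degree_eq_inter_eq_ncard_degree_le a hE,
    Set.ncard_inter_setOf_le_eq_sum ((finite_of_degree_le d).subset Set.inter_subset_left)]
  simp only [Set.inter_assoc]

end Finsupp

namespace MvPolynomial

variable {σ R : Type*} [CommSemiring R]

theorem supported_toSubmodule_eq_restrictSupport (s : Set σ) :
    (supported R s).toSubmodule = restrictSupport R {m | ↑m.support ⊆ s} := by
  ext p
  simp only [Subalgebra.mem_toSubmodule, mem_supported, mem_restrictSupport_iff, Set.subset_def,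
    Finset.mem_coe, mem_vars_iff_mem_support, Set.mem_ofPred_eq]
  grind

theorem restrictSupport_inter (s t : Set (σ →₀ ℕ)) :
    restrictSupport R (s ∩ t) = restrictSupport R s ⊓ restrictSupport R t := by
  ext p
  simp only [Submodule.mem_inf, mem_restrictSupport_iff, Set.subset_inter_iff]

theorem homogeneousSubmodule_eq_restrictSupport (d : ℕ) :
    homogeneousSubmodule σ R d = restrictSupport R {m | m.degree = d} :=
  homogeneousSubmodule_eq_finsupp_supported σ R d

end MvPolynomial

theorem MvPolynomial.finrank_restrictSupport {σ R : Type*} [CommRing R] [StrongRankCondition R]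
    (s : Set (σ →₀ ℕ)) : Module.finrank R (restrictSupport R s) = s.ncard :=
  Module.finrank_eq_nat_card_basis (basisRestrictSupport R s)

section

variable {n : ℕ} {K : Type} [Field K]

theorem IsMonomialIdeal.restrictScalars_inf_restrictSupport {J : Ideal (MvPolynomial (Fin n) K)}
    (hJ : IsMonomialIdeal J) (s : Set (Fin n →₀ ℕ)) :
    J.restrictScalars K ⊓ restrictSupport K s =
      restrictSupport K (s ∩ {m | monomial m (1 : K) ∈ J}) := by
  refine le_antisymm (fun f ⟨hfJ, hfs⟩ m hm => ⟨hfs hm, hJ f hfJ m hm⟩) (le_inf ?_ ?_)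
  · rw [restrictSupport_eq_span, Submodule.span_le]
    rintro _ ⟨m, ⟨-, hm⟩, rfl⟩
    exact hm
  · exact restrictSupport_mono _ Set.inter_subset_left

theorem gradedPiece_eq_restrictSupport {J : Ideal (MvPolynomial (Fin n) K)}
    (hJ : IsMonomialIdeal J) (d : ℕ) :
    gradedPiece J d = restrictSupport K ({m | m.degree = d} ∩ {m | monomial m (1 : K) ∈ J}) := by
  rw [gradedPiece, homogeneousSubmodule_eq_restrictSupport,
    hJ.restrictScalars_inf_restrictSupport]

theorem gradedPieceBar_eq_restrictSupport {J : Ideal (MvPolynomial (Fin (n + 1)) K)}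
    (hJ : IsMonomialIdeal J) (k : ℕ) :
    gradedPieceBar J k =
      restrictSupport K ({m | m.degree = k} ∩ {m | m (Fin.last n) = 0} ∩
        {m | monomial m (1 : K) ∈ J}) := by
  have hlast : {m : Fin (n + 1) →₀ ℕ | ↑m.support ⊆ {i | i ≠ Fin.last n}} =
      {m | m (Fin.last n) = 0} := by
    ext m
    simp [Set.subset_def, not_imp_not]
  rw [gradedPieceBar, homogeneousSubmodule_eq_restrictSupport,
    supported_toSubmodule_eq_restrictSupport, hlast, inf_assoc, ← restrictSupport_inter,
    hJ.restrictScalars_inf_restrictSupport]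

theorem StronglyStable.monomial_add_single_mem_of_lt {J : Ideal (MvPolynomial (Fin n) K)}
    (hJ : StronglyStable J) {i j : Fin n} (hij : i < j) (e : ℕ) {m : Fin n →₀ ℕ}
    (h : monomial (m + Finsupp.single j e) (1 : K) ∈ J) :
    monomial (m + Finsupp.single i e) (1 : K) ∈ J := by
  induction e generalizing m with
  | zero => simpa using h
  | succ e ih =>
    have hmove := hJ.2 _ h j i hij (by simp)
    rw [Finsupp.single_add, ← add_assoc, add_tsub_cancel_right] at hmove
    have := ih (m := m + Finsupp.single i 1) (by rwa [add_right_comm])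
    rwa [add_assoc, ← Finsupp.single_add, add_comm 1 e] at this

theorem monomial_mem_of_add_single_last {J : Ideal (MvPolynomial (Fin (n + 1)) K)}
    (hSS : StronglyStable J) (hSat : Saturated J) {m : Fin (n + 1) →₀ ℕ} {e : ℕ}
    (h : monomial (m + Finsupp.single (Fin.last n) e) (1 : K) ∈ J) :
    monomial m (1 : K) ∈ J := by
  refine hSat _ ⟨e, fun i => ?_⟩
  rw [X_pow_eq_monomial, monomial_mul, one_mul, add_comm (Finsupp.single i e)]
  rcases (Fin.le_last i).lt_or_eq with hi | rfl
  · exact hSS.monomial_add_single_mem_of_lt hi e h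
  · exact h

theorem monomial_mem_iff_erase_last {J : Ideal (MvPolynomial (Fin (n + 1)) K)}
    (hSS : StronglyStable J) (hSat : Saturated J) (m : Fin (n + 1) →₀ ℕ) :
    monomial m (1 : K) ∈ J ↔ monomial (m.erase (Fin.last n)) (1 : K) ∈ J := by
  conv_lhs => rw [← Finsupp.erase_add_single (Fin.last n) m]
  refine ⟨monomial_mem_of_add_single_last hSS hSat, fun h => ?_⟩
  simpa [monomial_mul] using
    J.mul_mem_right (monomial (Finsupp.single (Fin.last n) (m (Fin.last n))) (1 : K)) h

end

/-- For a saturated strongly stable ideal `J` in `K[x_1,…,x_{n+1}]`,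
`dim_K J_d = ∑_{k=0}^{d} dim_K J̄_k` for all `d ≥ 0`. -/
theorem stmt_1 {n : ℕ} {K : Type} [Field K]
    (J : Ideal (MvPolynomial (Fin (n + 1)) K))
    (hSS : StronglyStable J) (hSat : Saturated J) :
    ∀ d : ℕ, Module.finrank K (gradedPiece J d) =
      ∑ k ∈ Finset.range (d + 1), Module.finrank K (gradedPieceBar J k) := by
  intro d
  have hBar (k : ℕ) : Module.finrank K (gradedPieceBar J k) =
      ({m | m.degree = k} ∩ {m | m (Fin.last n) = 0} ∩ {m | monomial m (1 : K) ∈ J}).ncard := by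
    rw [gradedPieceBar_eq_restrictSupport hSS.1, finrank_restrictSupport]
  rw [gradedPiece_eq_restrictSupport hSS.1, finrank_restrictSupport]
  simp only [hBar]
  exact Finsupp.ncard_degree_eq_inter_eq_sum (Fin.last n)
    (monomial_mem_iff_erase_last hSS hSat) d
end

section
/- Let L ⊊ S = K[x_1,...,x_n] be a proper lex monomial ideal. Then depth(S/L) > 0 (equivalently, L is saturated) if and only if L is generated by at most n−1 monomials. -/
def flexLt {m : ℕ} (u v : Fin m → ℕ) : Prop :=
  ∃ i : Fin m, (∀ j : Fin m, j < i → u j = v j) ∧ u i < v i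

theorem key : ∀ (k : ℕ) (M : Set (Fin (k+1) → ℕ)),
    (∀ u ∈ M, ∀ v, u ≤ v → v ∈ M) →
    (∀ u ∈ M, ∀ v : Fin (k+1) → ℕ, (∑ i, v i) = (∑ i, u i) → flexLt u v → v ∈ M) →
    (∀ u ∈ M, Function.update u (Fin.last k) 0 ∈ M) →
    (0 : Fin (k+1) → ℕ) ∉ M →
    ∃ G : Finset (Fin (k+1) → ℕ), G.card ≤ k ∧ ↑G ⊆ M ∧ ∀ u ∈ M, ∃ g ∈ G, g ≤ u := by
  intro k
  induction k with
  | zero =>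
    intro M hup hlex hstrip h0
    refine ⟨∅, by simp, by simp, ?_⟩
    intro u hu
    exfalso
    apply h0
    have h : Function.update u (Fin.last 0) 0 = 0 := by
      funext i
      have hi : i = Fin.last 0 := Fin.ext (by omega)
      rw [hi]; simp
    exact h ▸ hstrip u hu
  | succ k IH =>
    intro M hup hlex hstrip h0
    classical
    by_cases hM : M = ∅
    · exact ⟨∅, by simp, by simp, by simp [hM]⟩
    obtain ⟨u₀, hu₀⟩ := Set.nonempty_iff_ne_empty.mpr hM
    set A : Set ℕ := {c | ∃ u ∈ M, u 0 = c} with hA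
    have hAne : A.Nonempty := ⟨u₀ 0, u₀, hu₀, rfl⟩
    set c := sInf A with hc
    obtain ⟨u₁, hu₁M, hu₁0⟩ : ∃ u ∈ M, u 0 = c := Nat.sInf_mem hAne
    have hle : ∀ u ∈ M, c ≤ u 0 := fun u hu => Nat.sInf_le ⟨u, hu, rfl⟩
    set pure : Fin (k+2) → ℕ := fun i => if i = 0 then c else 0 with hpure
    by_cases hpm : pure ∈ M
    · -- case A : one generator
      refine ⟨{pure}, by simp, ?_, ?_⟩
      · intro g hg
        rw [Finset.coe_singleton, Set.mem_singleton_iff] at hg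
        subst hg; exact hpm
      intro u hu
      refine ⟨pure, by simp, ?_⟩
      intro i
      by_cases hi : i = 0
      · subst hi; simpa [hpure] using hle u hu
      · simp [hpure, hi]
    · -- case B
      set D := ∑ i, u₁ i with hD
      have hsum0 : ∑ j ∈ Finset.univ.erase 0, u₁ j + u₁ 0 = D := by
        rw [hD]; exact Finset.sum_erase_add Finset.univ u₁ (Finset.mem_univ 0)
      have hDc : c + 1 ≤ D := by
        by_contra h
        push_neg at h
        have hcD : c ≤ D := by omega
        have hDceq : D = c := le_antisymm (by omega) hcD
        apply hpm
        have herase : ∑ j ∈ Finset.univ.erase 0, u₁ j = 0 := by omega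
        have : u₁ = pure := by
          funext i
          by_cases hi : i = 0
          · simp [hpure, hi, hu₁0]
          · simp only [hpure, if_neg hi]
            exact Finset.sum_eq_zero_iff.mp herase i
              (Finset.mem_erase.mpr ⟨hi, Finset.mem_univ i⟩)
        exact this ▸ hu₁M
      -- x_1^{c+1} ∈ M
      set e1 : Fin (k+2) → ℕ := fun i => if i = 0 then c + 1 else 0 with he1
      have hlast0 : (Fin.last (k+1) : Fin (k+2)) ≠ 0 := by
        simp [Fin.ext_iff]
      set v : Fin (k+2) → ℕ :=
        fun i => if i = 0 then c + 1 else if i = Fin.last (k+1) then D - (c+1) else 0 with hv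
      have hvM : v ∈ M := by
        apply hlex u₁ hu₁M
        · have hsplit : ∀ i : Fin (k+2), v i =
              (if i = 0 then c+1 else 0) + (if i = Fin.last (k+1) then D - (c+1) else 0) := by
            intro i
            by_cases h1 : i = 0
            · subst h1; simp [hv, Ne.symm hlast0]
            · simp [hv, h1]
          rw [Finset.sum_congr rfl (fun i _ => hsplit i), Finset.sum_add_distrib,
            Finset.sum_ite_eq' Finset.univ (0 : Fin (k+2)) (fun _ => c+1),
            Finset.sum_ite_eq' Finset.univ (Fin.last (k+1)) (fun _ => D - (c+1))]
          simp only [Finset.mem_univ, if_true, ← hD]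
          omega
        · exact ⟨0, fun j hj => absurd hj (by simp), by simp [hv, hu₁0]⟩
      have he1M : e1 ∈ M := by
        have h := hstrip v hvM
        have heq : Function.update v (Fin.last (k+1)) 0 = e1 := by
          funext i
          rcases eq_or_ne i (Fin.last (k+1)) with h | h
          · subst h
            rw [Function.update_self]
            simp [he1, hlast0]
          · rw [Function.update_of_ne h]
            simp [hv, he1, h]
        exact heq ▸ h
      set N : Set (Fin (k+1) → ℕ) := {t | Fin.cons c t ∈ M} with hN
      set consc : (Fin (k+1) → ℕ) → (Fin (k+2) → ℕ) := fun t => Fin.cons c t with hconsc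
      have hupN : ∀ t ∈ N, ∀ s, t ≤ s → s ∈ N := by
        -- up-closed
              intro t ht s hts
              refine hup _ ht _ (fun i => ?_)
              induction i using Fin.cases with
              | zero => simp
              | succ j => rw [Fin.cons_succ, Fin.cons_succ]; exact hts j
      have hlexN : ∀ t ∈ N, ∀ s : Fin (k+1) → ℕ, (∑ i, s i) = (∑ i, t i) → flexLt t s → s ∈ N := by
        -- lex
              intro t ht s hsum hlt
              obtain ⟨i, hpre, hi⟩ := hlt
              apply hlex _ ht
              · rw [Fin.sum_cons, Fin.sum_cons, hsum]
              · refine ⟨i.succ, ?_, by simpa using hi⟩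
                intro j hj
                induction j using Fin.cases with
                | zero => rw [Fin.cons_zero, Fin.cons_zero]
                | succ j' =>
                  rw [Fin.cons_succ, Fin.cons_succ]
                  exact hpre j' (Fin.succ_lt_succ_iff.mp hj)
      have hstripN : ∀ t ∈ N, Function.update t (Fin.last k) 0 ∈ N := by
        -- strip
              intro t ht
              have h := hstrip _ ht
              have heq : Function.update (Fin.cons c t) (Fin.last (k+1)) 0
                  = consc (Function.update t (Fin.last k) 0) := by
                funext i
                induction i using Fin.cases with
                | zero =>
                  rw [Function.update_of_ne (Ne.symm hlast0), Fin.cons_zero]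
                  simp [hconsc]
                | succ j =>
                  rw [Function.update_apply, Fin.cons_succ]
                  simp only [hconsc]
                  rw [Fin.cons_succ, Function.update_apply]
                  have hiff : (j.succ = Fin.last (k+1)) ↔ (j = Fin.last k) := by
                    rw [← Fin.succ_last, Fin.succ_inj]
                  by_cases hj : j = Fin.last k
                  · simp [hiff.mpr hj, hj]
                  · simp [hiff, hj]
              show consc (Function.update t (Fin.last k) 0) ∈ M
              exact heq ▸ h
      have h0N : (0 : Fin (k+1) → ℕ) ∉ N := by
        -- 0 ∉ N
              intro h0N
              apply hpm
              have hcp : Fin.cons c (0 : Fin (k+1) → ℕ) = pure := by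
                funext i
                induction i using Fin.cases with
                | zero => simp [hpure]
                | succ j => simp [hpure, Fin.succ_ne_zero j]
              exact hcp ▸ h0N
      obtain ⟨G', hG'card, hG'sub, hG'dom⟩ := IH N hupN hlexN hstripN h0N
      refine ⟨insert e1 (G'.image consc), ?_, ?_, ?_⟩
      · have h1 : (G'.image consc).card ≤ G'.card := Finset.card_image_le
        have h2 := Finset.card_insert_le e1 (G'.image consc)
        omega
      · intro g hg
        simp only [Finset.coe_insert, Set.mem_insert_iff, Finset.coe_image, Set.mem_image] at hg
        rcases hg with rfl | ⟨t, ht, rfl⟩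
        · exact he1M
        · exact hG'sub ht
      · intro u hu
        rcases eq_or_lt_of_le (hle u hu) with h0eq | hlt
        · -- u 0 = c
          have hcons : Fin.cons c (Fin.tail u) = u := by
            funext i
            induction i using Fin.cases with
            | zero => rw [Fin.cons_zero]; exact h0eq
            | succ j => rw [Fin.cons_succ]; rfl
          have htail : Fin.tail u ∈ N := by
            show Fin.cons c (Fin.tail u) ∈ M
            rw [hcons]; exact hu
          obtain ⟨g', hg'G, hg'le⟩ := hG'dom _ htail
          refine ⟨Fin.cons c g',
            Finset.mem_insert.mpr (Or.inr (Finset.mem_image.mpr ⟨g', hg'G, rfl⟩)),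
            fun i => ?_⟩
          induction i using Fin.cases with
          | zero => rw [Fin.cons_zero]; exact h0eq.le
          | succ j => rw [Fin.cons_succ]; exact hg'le j
        · refine ⟨e1, Finset.mem_insert_self _ _, fun i => ?_⟩
          by_cases hi : i = 0
          · subst hi; simpa [he1] using hlt
          · simp [he1, hi]


open MvPolynomial



open MvPolynomial

def mdeg {n : ℕ} (m : Fin n →₀ ℕ) : ℕ := ∑ i, m i

def LexLt {n : ℕ} (u v : Fin n →₀ ℕ) : Prop :=
  ∃ i : Fin n, (∀ j : Fin n, j < i → u j = v j) ∧ u i < v i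

def LexIdeal {n : ℕ} {K : Type} [Field K] (L : Ideal (MvPolynomial (Fin n) K)) : Prop :=
  IsMonomialIdeal L ∧
  ∀ u v : Fin n →₀ ℕ, (monomial u (1 : K) : MvPolynomial (Fin n) K) ∈ L →
    mdeg v = mdeg u → LexLt u v → (monomial v (1 : K) : MvPolynomial (Fin n) K) ∈ L

def GenByMonomials {n : ℕ} {K : Type} [Field K] (L : Ideal (MvPolynomial (Fin n) K))
    (k : ℕ) : Prop :=
  ∃ G : Finset (Fin n →₀ ℕ), G.card ≤ k ∧
    L = Ideal.span ((fun m => (monomial m (1 : K) : MvPolynomial (Fin n) K)) '' ↑G)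


theorem mono_mem_of_le {n : ℕ} {K : Type} [Field K] {L : Ideal (MvPolynomial (Fin n) K)}
    {a b : Fin n →₀ ℕ} (hab : a ≤ b) (h : (monomial a (1 : K) : MvPolynomial (Fin n) K) ∈ L) :
    (monomial b (1 : K) : MvPolynomial (Fin n) K) ∈ L := by
  have heq : (monomial b (1 : K) : MvPolynomial (Fin n) K)
      = monomial (b - a) (1 : K) * monomial a (1 : K) := by
    rw [monomial_mul, one_mul, tsub_add_cancel_of_le hab]
  rw [heq]
  exact Ideal.mul_mem_left _ _ h

noncomputable def toF {n : ℕ} (u : Fin n → ℕ) : Fin n →₀ ℕ :=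
  Finsupp.equivFunOnFinite.symm u

theorem coe_toF {n : ℕ} (u : Fin n → ℕ) : ⇑(toF u) = u :=
  Finsupp.equivFunOnFinite.apply_symm_apply u

theorem toF_coe {n : ℕ} (m : Fin n →₀ ℕ) : toF ⇑m = m :=
  Finsupp.equivFunOnFinite_symm_coe m

theorem mdeg_toF {n : ℕ} (u : Fin n → ℕ) :
    mdeg (toF u) = ∑ i, u i := by
  unfold mdeg
  simp [coe_toF]

/-- Stripping the last variable, for a saturated lex ideal. -/
theorem strip_mem {n : ℕ} {K : Type} [Field K] {L : Ideal (MvPolynomial (Fin (n+1)) K)}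
    (hL : LexIdeal L) (hsat : Saturated L) {u : Fin (n+1) → ℕ}
    (hu : (monomial (toF u) (1:K) : MvPolynomial (Fin (n+1)) K) ∈ L) :
    (monomial (toF (Function.update u (Fin.last n) 0)) (1:K) :
      MvPolynomial (Fin (n+1)) K) ∈ L := by
  classical
  set k := u (Fin.last n) with hk
  by_cases hk0 : k = 0
  · have : Function.update u (Fin.last n) 0 = u := by
      funext j
      rw [Function.update_apply]
      by_cases hj : j = Fin.last n
      · subst hj; simp [← hk, hk0]
      · simp [hj]
    rw [this]
    exact hu
  set s : Fin (n+1) → ℕ := Function.update u (Fin.last n) 0 with hs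
  have hsj : ∀ j, j ≠ Fin.last n → s j = u j := fun j hj => Function.update_of_ne hj _ _
  have hslast : s (Fin.last n) = 0 := Function.update_self _ _ _
  have hu_eq : u = fun j => (if Fin.last n = j then k else 0) + s j := by
    funext j
    by_cases hj : j = Fin.last n
    · subst hj; simp [hslast, hk]
    · rw [if_neg (fun h => hj h.symm), zero_add, hsj j hj]
  -- the monomial products
  have hprod : ∀ i : Fin (n+1), (X i : MvPolynomial (Fin (n+1)) K) ^ k * monomial (toF s) 1
      = monomial (toF (fun j => (if i = j then k else 0) + s j)) 1 := by
    intro i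
    have harg : Finsupp.single i k + toF s
        = toF (fun j => (if i = j then k else 0) + s j) := by
      apply Finsupp.ext
      intro j
      have h1 := congrFun (coe_toF (n := n+1) s) j
      have h2 := congrFun (coe_toF (n := n+1) (fun j => (if i = j then k else 0) + s j)) j
      rw [Finsupp.add_apply, Finsupp.single_apply, h1, h2]
    rw [X_pow_eq_monomial, monomial_mul, one_mul, harg]
  apply hsat
  refine ⟨k, fun i => ?_⟩
  rw [hprod i]
  by_cases hi : i = Fin.last n
  · subst hi
    have : (fun j => (if Fin.last n = j then k else 0) + s j) = u := hu_eq.symm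
    rw [this]
    exact hu
  · -- lex move
    apply hL.2 (toF u) _ hu
    · rw [mdeg_toF, mdeg_toF, hu_eq]
      rw [Finset.sum_add_distrib, Finset.sum_add_distrib]
      congr 1
      simp
    · refine ⟨i, fun j hj => ?_, ?_⟩
      · have hji : j ≠ i := ne_of_lt hj
        have hjlast : j ≠ Fin.last n := by
          intro h
          subst h
          exact absurd (lt_of_lt_of_le hj (Fin.le_last i)) (lt_irrefl _)
        rw [congrFun (coe_toF u) j, congrFun (coe_toF _) j]
        show u j = (if i = j then k else 0) + s j
        rw [if_neg (Ne.symm hji), zero_add, hsj j hjlast]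
      · rw [congrFun (coe_toF u) i, congrFun (coe_toF _) i]
        show u i < (if i = i then k else 0) + s i
        rw [if_pos rfl, ← hsj i hi]
        have hk1 : 0 < k := Nat.pos_of_ne_zero hk0
        omega

/-- For a proper lex ideal `L ⊊ K[x_1,…,x_{n+1}]`, `L` is saturated (equivalently
`depth(S/L) > 0`) if and only if `L` is generated by at most `n` monomials
(i.e. at most (number of variables) − 1 monomials). -/
theorem stmt_5 {n : ℕ} {K : Type} [Field K]
    (L : Ideal (MvPolynomial (Fin (n + 1)) K)) (hL : LexIdeal L) (hne : L ≠ ⊤) :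
    Saturated L ↔ GenByMonomials L n := by
  classical
  constructor
  · -- saturated → few generators
    intro hsat
    set M : Set (Fin (n+1) → ℕ) :=
      {u | (monomial (toF u) (1:K) : MvPolynomial (Fin (n+1)) K) ∈ L} with hM
    have hup : ∀ u ∈ M, ∀ v, u ≤ v → v ∈ M := by
      intro u hu v huv
      exact mono_mem_of_le (by
        rw [Finsupp.le_def]
        intro j
        rw [congrFun (coe_toF u) j, congrFun (coe_toF v) j]
        exact huv j) hu
    have hlex : ∀ u ∈ M, ∀ v : Fin (n+1) → ℕ, (∑ i, v i) = (∑ i, u i) → flexLt u v → v ∈ M := by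
      intro u hu v hsum hlt
      obtain ⟨i, hpre, hi⟩ := hlt
      apply hL.2 (toF u) (toF v) hu
      · rw [mdeg_toF, mdeg_toF, hsum]
      · refine ⟨i, fun j hj => ?_, ?_⟩
        · rw [congrFun (coe_toF u) j, congrFun (coe_toF v) j]
          exact hpre j hj
        · rw [congrFun (coe_toF u) i, congrFun (coe_toF v) i]
          exact hi
    have hstrip : ∀ u ∈ M, Function.update u (Fin.last n) 0 ∈ M := by
      intro u hu
      exact strip_mem hL hsat hu
    have h0 : (0 : Fin (n+1) → ℕ) ∉ M := by
      intro h0M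
      apply hne
      rw [Ideal.eq_top_iff_one]
      have he : toF (0 : Fin (n+1) → ℕ) = 0 := by
        apply Finsupp.ext
        intro j
        rw [congrFun (coe_toF (0 : Fin (n+1) → ℕ)) j]
        rfl
      have := h0M
      rw [Set.mem_setOf_eq, he, monomial_zero', C_1] at this
      exact this
    obtain ⟨Gf, hGcard, hGsub, hGdom⟩ := key n M hup hlex hstrip h0
    refine ⟨Gf.image toF, le_trans Finset.card_image_le hGcard, ?_⟩
    apply le_antisymm
    · -- L ≤ span
      intro f hf
      rw [mem_ideal_span_monomial_image]
      intro m hm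
      have hmL : (monomial m (1:K) : MvPolynomial (Fin (n+1)) K) ∈ L := hL.1 f hf m hm
      have hmM : (⇑m : Fin (n+1) → ℕ) ∈ M := by
        rw [hM, Set.mem_setOf_eq, toF_coe]
        exact hmL
      obtain ⟨g, hgG, hgle⟩ := hGdom _ hmM
      refine ⟨toF g, ?_, ?_⟩
      · exact Finset.mem_coe.mpr (Finset.mem_image_of_mem toF hgG)
      · rw [Finsupp.le_def]
        intro j
        rw [congrFun (coe_toF g) j]
        exact hgle j
    · -- span ≤ L
      rw [Ideal.span_le]
      rintro p ⟨m, hmG, rfl⟩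
      rw [Finset.coe_image] at hmG
      obtain ⟨g, hgG, rfl⟩ := hmG
      exact hGsub hgG
  · -- few generators → saturated
    rintro ⟨G, hGcard, hGspan⟩ f ⟨k, hk⟩
    rw [hGspan, mem_ideal_span_monomial_image]
    intro m hm
    have hgi : ∀ i : Fin (n+1), ∃ g ∈ (↑G : Set (Fin (n+1) →₀ ℕ)),
        g ≤ Finsupp.single i k + m := by
      intro i
      have hfi := hk i
      rw [hGspan, mem_ideal_span_monomial_image] at hfi
      apply hfi
      rw [mem_support_iff, X_pow_eq_monomial, coeff_monomial_mul, one_mul]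
      exact mem_support_iff.mp hm
    choose g hgG hgle using hgi
    have hcard : G.card < (Finset.univ : Finset (Fin (n+1))).card := by
      rw [Finset.card_univ, Fintype.card_fin]
      omega
    obtain ⟨i, -, j, -, hij, hgij⟩ :=
      Finset.exists_ne_map_eq_of_card_lt_of_maps_to hcard
        (fun i _ => Finset.mem_coe.mp (hgG i))
    refine ⟨g i, hgG i, ?_⟩
    rw [Finsupp.le_def]
    intro l
    by_cases hl : l = i
    · subst hl
      have := Finsupp.le_def.mp (hgle j) l
      rw [Finsupp.add_apply, Finsupp.single_apply, if_neg (Ne.symm hij)] at this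
      rw [hgij]
      simpa using this
    · have := Finsupp.le_def.mp (hgle i) l
      rw [Finsupp.add_apply, Finsupp.single_apply, if_neg (Ne.symm hl)] at this
      simpa using this
end

section
/- Define the opposite degree lex order on monomials of K[x_1,...,x_n] by u >_oplex v iff deg u < deg v, or deg u = deg v and u >_lex v. Let [u_1, u_2] = {v : u_1 ≥_oplex v ≥_oplex u_2} be an interval, let a ≤ deg u_1 and b ≥ deg u_2, let L be the lower lex set of degree a (an interval of the form [x_1^a, w]) with #L = #[u_1,u_2], and let R be the upper rev-lex set of degree b (an interval of the form [w', x_n^b]) with #R = #[u_1,u_2]. Then for every k = 1,...,n: m_k(L) ≥ m_k([u_1,u_2]) ≥ m_k(R), where m_k(M) counts monomials in M supported on x_1,...,x_k. -/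
/-- `OplexLe u v` means `u ≤_oplex v`: either `u = v`, or `deg v < deg u`, or the degrees agree
and `v >_lex u`. -/
def OplexLe {n : ℕ} (u v : Fin n →₀ ℕ) : Prop :=
  u = v ∨ mdeg v < mdeg u ∨ (mdeg v = mdeg u ∧ LexLt u v)

/-- `m_k(A)`: the number of monomials of `A` supported on `x_1,…,x_k`. -/
def mnum {n : ℕ} (A : Finset (Fin n →₀ ℕ)) (k : ℕ) : ℕ :=
  (A.filter (fun u => ∀ i : Fin n, u i ≠ 0 → i.val + 1 ≤ k)).card

/-!
List the monomials in `x_1, …, x_{n+1}` in decreasing opposite degree lex order and record by a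
0/1 sequence which of them only involve `x_1, …, x_k`. The three sets are windows of `#A`
consecutive terms of this sequence, `L` starting at the first monomial of degree `a` and `R`
ending at the last monomial of degree `b`, and `m_k` is the sum over the window.

Sorting by the exponent of `x_1`, the monomials of degree `d` in `n + 2` variables are listed like
the monomials of degree `≤ d` in the last `n + 1` variables, so the sequence for `n + 2` variables
and `k + 1` is the concatenation of the prefixes of the sequence for `n + 1` variables and `k` that
end at degree boundaries. By induction on the number of variables, a window starting at a degree
boundary has the largest sum among the windows starting after it, and a window ending at a degree
boundary has the smallest sum among the windows ending before it: cutting a window at block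
boundaries, each piece is compared with a prefix or with a suffix of a block.
-/

open Finset Finsupp

section Oplex

variable {n : ℕ}

/-- Degree first, then reversed lex: `OplexLe u v ↔ oplexKey v ≤ oplexKey u`. -/
def oplexKey (u : Fin n →₀ ℕ) : ℕ ×ₗ (Lex (Fin n →₀ ℕ))ᵒᵈ :=
  toLex (mdeg u, OrderDual.toDual (toLex u))

lemma oplexKey_injective : Function.Injective (oplexKey (n := n)) := fun _ _ h =>
  toLex.injective (OrderDual.toDual.injective (congrArg Prod.snd (toLex.injective h)))

lemma lexLt_iff_toLex_lt {u v : Fin n →₀ ℕ} : LexLt u v ↔ toLex u < toLex v := Iff.rfl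

lemma oplexLe_iff_key_le {u v : Fin n →₀ ℕ} : OplexLe u v ↔ oplexKey v ≤ oplexKey u := by
  rw [OplexLe, oplexKey, oplexKey, Prod.Lex.toLex_le_toLex, lexLt_iff_toLex_lt]
  simp only [OrderDual.toDual_le_toDual, le_iff_eq_or_lt (a := toLex u)]
  constructor
  · rintro (rfl | h | ⟨h, h'⟩)
    · exact Or.inr ⟨rfl, Or.inl rfl⟩
    · exact Or.inl h
    · exact Or.inr ⟨h, Or.inr h'⟩
  · rintro (h | ⟨h, h' | h'⟩)
    · exact Or.inr (Or.inl h)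
    · exact Or.inl (toLex.injective h')
    · exact Or.inr (Or.inr ⟨h, h'⟩)

lemma mdeg_le_of_key_lt {u v : Fin n →₀ ℕ} (h : oplexKey u < oplexKey v) : mdeg u ≤ mdeg v := by
  rcases Prod.Lex.toLex_lt_toLex.mp h with h | ⟨h, -⟩ <;> omega

lemma apply_le_mdeg (u : Fin n →₀ ℕ) (i : Fin n) : u i ≤ mdeg u :=
  single_le_sum (fun j _ => Nat.zero_le (u j)) (mem_univ i)

lemma eq_zero_of_mdeg_eq_zero {u : Fin n →₀ ℕ} (h : mdeg u = 0) : u = 0 := by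
  ext i
  exact Nat.le_zero.mp (h ▸ apply_le_mdeg u i)

lemma mdeg_single (i : Fin n) (c : ℕ) : mdeg (single i c) = c := by
  rw [mdeg, sum_eq_single i (fun j _ hj => single_eq_of_ne' hj.symm) (by simp), single_eq_same]

variable (n) in
open Classical in
noncomputable def degLt (d : ℕ) : Finset (Fin n →₀ ℕ) :=
  (Iic (equivFunOnFinite.symm fun _ => d)).filter (mdeg · < d)

@[simp]
lemma mem_degLt {d : ℕ} {z : Fin n →₀ ℕ} : z ∈ degLt n d ↔ mdeg z < d := by
  classical
  simp only [degLt, mem_filter, mem_Iic, and_iff_right_iff_imp]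
  exact fun h => Finsupp.le_def.mpr fun i => by simpa using (apply_le_mdeg z i).trans h.le

lemma degLt_mono : Monotone (degLt n) := fun _ _ h _ => by simp only [mem_degLt]; omega

open Classical in
noncomputable def above (u : Fin n →₀ ℕ) : Finset (Fin n →₀ ℕ) :=
  (degLt n (mdeg u + 1)).filter (oplexKey · < oplexKey u)

@[simp]
lemma mem_above {u w : Fin n →₀ ℕ} : w ∈ above u ↔ oplexKey w < oplexKey u := by
  classical
  simp only [above, mem_filter, mem_degLt, and_iff_right_iff_imp]
  exact fun h => Nat.lt_succ_of_le (mdeg_le_of_key_lt h)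

/-- The number of monomials preceding `u` in decreasing opposite degree lex order. -/
noncomputable def rank (u : Fin n →₀ ℕ) : ℕ := #(above u)

lemma rank_lt_rank {u v : Fin n →₀ ℕ} (h : oplexKey u < oplexKey v) : rank u < rank v :=
  card_lt_card ⟨fun _ hw => mem_above.mpr ((mem_above.mp hw).trans h),
    fun hsub => lt_irrefl _ (mem_above.mp (hsub (mem_above.mpr h)))⟩

lemma rank_le_rank_iff {u v : Fin n →₀ ℕ} : rank u ≤ rank v ↔ oplexKey u ≤ oplexKey v := by
  refine ⟨fun h => not_lt.mp fun h' => (rank_lt_rank h').not_ge h, fun h => ?_⟩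
  rcases h.lt_or_eq with h | h
  · exact (rank_lt_rank h).le
  · rw [oplexKey_injective h]

lemma rank_injective : Function.Injective (rank (n := n)) := fun _ _ h =>
  oplexKey_injective (le_antisymm (rank_le_rank_iff.mp h.le) (rank_le_rank_iff.mp h.ge))

lemma oplexLe_iff_rank_le {u v : Fin n →₀ ℕ} : OplexLe u v ↔ rank v ≤ rank u := by
  rw [oplexLe_iff_key_le, rank_le_rank_iff]

lemma rank_lt_card_degLt_iff {u : Fin n →₀ ℕ} {d : ℕ} : rank u < #(degLt n d) ↔ mdeg u < d := by
  constructor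
  · refine fun h => not_le.mp fun hd => h.not_ge (card_le_card fun w hw => ?_)
    rw [mem_degLt] at hw
    rw [mem_above, oplexKey, oplexKey, Prod.Lex.toLex_lt_toLex]
    exact Or.inl (by omega)
  · intro hd
    rw [rank, ← Nat.add_one_le_iff, ← card_insert_of_notMem (fun h => lt_irrefl _ (mem_above.mp h))]
    refine card_le_card fun w hw => ?_
    rcases mem_insert.mp hw with rfl | hw
    · exact mem_degLt.mpr hd
    · exact mem_degLt.mpr ((mdeg_le_of_key_lt (mem_above.mp hw)).trans_lt hd)

lemma card_degLt_le_rank (u : Fin n →₀ ℕ) : #(degLt n (mdeg u)) ≤ rank u :=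
  not_lt.mp fun h => lt_irrefl _ (rank_lt_card_degLt_iff.mp h)

lemma rank_zero : rank (0 : Fin n →₀ ℕ) = 0 := by
  refine card_eq_zero.mpr (eq_empty_of_forall_notMem fun w hw => ?_)
  have hw := mem_above.mp hw
  have : w = 0 := eq_zero_of_mdeg_eq_zero (by simpa [mdeg] using mdeg_le_of_key_lt hw)
  exact lt_irrefl _ (this ▸ hw)

lemma card_degLt_lt_card_degLt_succ (d : ℕ) : #(degLt (n + 1) d) < #(degLt (n + 1) (d + 1)) :=
  card_lt_card <| (ssubset_iff_of_subset (degLt_mono d.le_succ)).mpr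
    ⟨single 0 d, by simp [mdeg_single]⟩

lemma le_card_degLt (d : ℕ) : d ≤ #(degLt (n + 1) d) := by
  induction d with
  | zero => exact Nat.zero_le _
  | succ d ih => exact ih.trans_lt (card_degLt_lt_card_degLt_succ d)

lemma image_rank_degLt (d : ℕ) : (degLt n d).image rank = range #(degLt n d) :=
  eq_of_subset_of_card_le
    (fun _ hm => by
      obtain ⟨u, hu, rfl⟩ := mem_image.mp hm
      exact mem_range.mpr (rank_lt_card_degLt_iff.mpr (mem_degLt.mp hu)))
    (by rw [card_range, card_image_of_injective _ rank_injective])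

lemma rank_surjective : Function.Surjective (rank (n := n + 1)) := fun m => by
  have hm : m ∈ (degLt (n + 1) (m + 1)).image rank := by
    rw [image_rank_degLt]
    exact mem_range.mpr ((le_card_degLt _).trans_lt' m.lt_succ_self)
  obtain ⟨u, -, hu⟩ := mem_image.mp hm
  exact ⟨u, hu⟩

end Oplex

section Tail

variable {n : ℕ}

lemma mdeg_eq_add_mdeg_tail (z : Fin (n + 1) →₀ ℕ) : mdeg z = z 0 + mdeg (tail z) := by
  simp [mdeg, Fin.sum_univ_succ, tail_apply]

lemma mdeg_cons (y : ℕ) (v : Fin n →₀ ℕ) : mdeg (cons y v) = y + mdeg v := by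
  rw [mdeg_eq_add_mdeg_tail, cons_zero, tail_cons]

lemma lexLt_iff_tail {z w : Fin (n + 1) →₀ ℕ} :
    LexLt z w ↔ z 0 < w 0 ∨ z 0 = w 0 ∧ LexLt (tail z) (tail w) := by
  have hz : ⇑z = Fin.cons (z 0) (⇑(tail z)) := by ext i; cases i using Fin.cases <;> rfl
  have hw : ⇑w = Fin.cons (w 0) (⇑(tail w)) := by ext i; cases i using Fin.cases <;> rfl
  change Pi.Lex _ _ ⇑z ⇑w ↔ _
  rw [hz, hw, Fin.pi_lex_lt_cons_cons]
  rfl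

/-- Within one degree, `x_1` is compared first: more `x_1` means a tail of smaller degree. -/
lemma oplexKey_lt_iff_tail {z w : Fin (n + 1) →₀ ℕ} (hd : mdeg z = mdeg w) :
    oplexKey z < oplexKey w ↔ oplexKey (tail z) < oplexKey (tail w) := by
  have hz := mdeg_eq_add_mdeg_tail z
  have hw := mdeg_eq_add_mdeg_tail w
  simp only [oplexKey, Prod.Lex.toLex_lt_toLex, OrderDual.toDual_lt_toDual, ← lexLt_iff_toLex_lt,
    lexLt_iff_tail (z := w)]
  by_cases h : LexLt (tail w) (tail z) <;> simp only [h, and_true, and_false, or_false] <;> omega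

lemma card_filter_mdeg_eq_of_tail {s : Finset (Fin (n + 1) →₀ ℕ)} {t : Finset (Fin n →₀ ℕ)}
    {d : ℕ} (hst : ∀ z, mdeg z = d → (z ∈ s ↔ tail z ∈ t)) (ht : ∀ v ∈ t, mdeg v ≤ d) :
    #(s.filter (mdeg · = d)) = #t := by
  refine card_nbij' tail (fun v => cons (d - mdeg v) v) ?_ ?_ ?_ ?_
  · intro z hz
    obtain ⟨hz, hd⟩ := mem_filter.mp hz
    exact (hst z hd).mp hz
  · intro v hv
    have hd : mdeg (cons (d - mdeg v) v) = d := by rw [mdeg_cons]; have := ht v hv; omega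
    exact mem_filter.mpr ⟨(hst _ hd).mpr (by rwa [tail_cons]), hd⟩
  · intro z hz
    have hd := (mem_filter.mp hz).2
    have := mdeg_eq_add_mdeg_tail z
    conv_rhs => rw [← cons_tail z]
    dsimp only
    congr 1
    omega
  · intro v _
    exact tail_cons _ _

lemma card_eq_card_degLt_add_of_tail {s : Finset (Fin (n + 1) →₀ ℕ)} {t : Finset (Fin n →₀ ℕ)}
    {d : ℕ} (hs : ∀ z ∈ s, mdeg z ≤ d) (hlow : ∀ z, mdeg z < d → z ∈ s)
    (hst : ∀ z, mdeg z = d → (z ∈ s ↔ tail z ∈ t)) (ht : ∀ v ∈ t, mdeg v ≤ d) :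
    #s = #(degLt (n + 1) d) + #t := by
  classical
  rw [← card_filter_add_card_filter_not (s := s) (mdeg · < d), ← card_filter_mdeg_eq_of_tail hst ht]
  congr 2
  · ext z
    simp only [mem_filter, mem_degLt, and_iff_right_iff_imp]
    exact hlow z
  · exact filter_congr fun z hz => by have := hs z hz; omega

lemma card_degLt_succ (d : ℕ) :
    #(degLt (n + 1) (d + 1)) = #(degLt (n + 1) d) + #(degLt n (d + 1)) :=
  card_eq_card_degLt_add_of_tail (fun z hz => Nat.le_of_lt_succ (mem_degLt.mp hz))
    (fun z hz => mem_degLt.mpr (by omega))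
    (fun z hz => by simp only [mem_degLt]; have := mdeg_eq_add_mdeg_tail z; omega)
    (fun v hv => Nat.le_of_lt_succ (mem_degLt.mp hv))

lemma rank_eq_card_degLt_add_rank_tail (z : Fin (n + 1) →₀ ℕ) :
    rank z = #(degLt (n + 1) (mdeg z)) + rank (tail z) := by
  have hz := mdeg_eq_add_mdeg_tail z
  refine card_eq_card_degLt_add_of_tail (fun w hw => mdeg_le_of_key_lt (mem_above.mp hw))
    (fun w hw => mem_above.mpr (Prod.Lex.toLex_lt_toLex.mpr (Or.inl hw)))
    (fun w hw => by rw [mem_above, mem_above, oplexKey_lt_iff_tail hw])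
    (fun v hv => by have := mdeg_le_of_key_lt (mem_above.mp hv); omega)

end Tail

section Windows

def window (f : ℕ → ℕ) (p t : ℕ) : ℕ := ∑ i ∈ range t, f (p + i)

@[simp]
lemma window_zero (f : ℕ → ℕ) (p : ℕ) : window f p 0 = 0 := rfl

lemma window_add (f : ℕ → ℕ) (p s t : ℕ) :
    window f p (s + t) = window f p s + window f (p + s) t := by
  simp only [window, sum_range_add, add_assoc]

lemma window_split (f : ℕ → ℕ) {s t : ℕ} (p : ℕ) (h : s ≤ t) :
    window f p t = window f p s + window f (p + s) (t - s) := by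
  rw [← window_add, Nat.add_sub_cancel' h]

lemma antitone_window {f : ℕ → ℕ} (hf : Antitone f) (t : ℕ) : Antitone (window f · t) :=
  fun _ _ h => sum_le_sum fun i _ => hf (by omega)

def StartWindowsMax (f S : ℕ → ℕ) : Prop :=
  ∀ a p t, S a ≤ p → window f p t ≤ window f (S a) t

def EndWindowsMin (f E : ℕ → ℕ) : Prop :=
  ∀ b q t, q + t ≤ E b → window f (E b - t) t ≤ window f q t

lemma startWindowsMax_of_antitone {f : ℕ → ℕ} (hf : Antitone f) (S : ℕ → ℕ) :
    StartWindowsMax f S :=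
  fun _ _ t h => antitone_window hf t h

lemma endWindowsMin_of_antitone {f : ℕ → ℕ} (hf : Antitone f) (E : ℕ → ℕ) :
    EndWindowsMin f E :=
  fun _ _ t h => antitone_window hf t (by omega)

structure IsConcatOfPrefixes (g f N S : ℕ → ℕ) : Prop where
  monotone : Monotone N
  pos : 0 < N 0
  start_zero : S 0 = 0
  start_succ : ∀ d, S (d + 1) = S d + N d
  apply_start_add : ∀ d j, j < N d → g (S d + j) = f j

namespace IsConcatOfPrefixes

variable {g f N S : ℕ → ℕ} (hc : IsConcatOfPrefixes g f N S)
include hc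

lemma start_mono : Monotone S :=
  monotone_nat_of_le_succ fun d => by rw [hc.start_succ]; omega

lemma lt_start_succ (p : ℕ) : p < S (p + 1) := by
  induction p with
  | zero => rw [hc.start_succ, hc.start_zero, zero_add]; exact hc.pos
  | succ p ih =>
    rw [hc.start_succ]
    have := hc.monotone (Nat.zero_le (p + 1))
    have := hc.pos
    omega

lemma exists_block_le {x b : ℕ} (hx : x < S (b + 1)) : ∃ e ≤ b, S e ≤ x ∧ x < S (e + 1) := by
  induction b with
  | zero => exact ⟨0, le_rfl, by rw [hc.start_zero]; exact Nat.zero_le x, hx⟩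
  | succ b ih =>
    rcases lt_or_ge x (S (b + 1)) with h | h
    · obtain ⟨e, he, hex⟩ := ih h
      exact ⟨e, he.trans b.le_succ, hex⟩
    · exact ⟨b + 1, le_rfl, h, hx⟩

lemma exists_block_ge {x a : ℕ} (hx : S a ≤ x) : ∃ e, a ≤ e ∧ S e ≤ x ∧ x < S (e + 1) := by
  obtain ⟨e, -, hex, hxe⟩ := hc.exists_block_le (hc.lt_start_succ x)
  refine ⟨e, not_lt.mp fun hea => ?_, hex, hxe⟩
  have := hc.start_mono (show e + 1 ≤ a by omega)
  omega

lemma window_start_add {d j t : ℕ} (h : j + t ≤ N d) : window g (S d + j) t = window f j t :=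
  sum_congr rfl fun i hi => by
    rw [add_assoc, hc.apply_start_add d (j + i) (by have := mem_range.mp hi; omega)]

lemma window_start {d t : ℕ} (h : t ≤ N d) : window g (S d) t = window f 0 t := by
  simpa using hc.window_start_add (j := 0) (by simpa using h)

variable (hzero : ∀ p t, window f p t ≤ window f 0 t) (hend : EndWindowsMin f N)
include hzero hend

/-- Cut the window at the end of the block containing `p`: the piece inside that block is a
suffix of a prefix of `f`, the rest is handled by induction. -/
lemma window_le_window_zero {d p t : ℕ} (hp : S d ≤ p) (ht : t ≤ N d) :
    window g p t ≤ window f 0 t := by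
  induction t using Nat.strong_induction_on generalizing p with
  | _ t ih =>
  obtain ⟨e, hde, hep, hpe⟩ := hc.exists_block_ge hp
  have hNde := hc.monotone hde
  have hSe := hc.start_succ e
  rcases le_or_gt (p + t) (S (e + 1)) with hin | hout
  · rw [show p = S e + (p - S e) by omega, hc.window_start_add (by omega)]
    exact hzero _ _
  · have hSde : S d ≤ S (e + 1) := hc.start_mono (by omega)
    obtain ⟨μ, hμ⟩ : ∃ μ, p + μ = S (e + 1) := ⟨S (e + 1) - p, by omega⟩
    calc window g p t = window g (S e + (N e - μ)) μ + window g (S (e + 1)) (t - μ) := by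
          rw [window_split g p (show μ ≤ t by omega), hμ, show S e + (N e - μ) = p by omega]
      _ ≤ window f (t - μ) μ + window f 0 (t - μ) := by
          rw [hc.window_start_add (by omega)]
          exact add_le_add (hend e (t - μ) μ (by omega)) (ih _ (by omega) hSde (by omega))
      _ = window f 0 t := by
          rw [add_comm, window_split f 0 (show t - μ ≤ t by omega), zero_add,
            Nat.sub_sub_self (show μ ≤ t by omega)]

lemma window_sub_le_window {d q t : ℕ} (hq : q + t ≤ S (d + 1)) (ht : t ≤ N d) :
    window f (N d - t) t ≤ window g q t := by
  induction t using Nat.strong_induction_on generalizing q with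
  | _ t ih =>
  rcases Nat.eq_zero_or_pos t with rfl | htpos
  · simp
  obtain ⟨e, hed, heq, hqe⟩ := hc.exists_block_le (show q + t - 1 < S (d + 1) by omega)
  have hNed := hc.monotone hed
  have hSe := hc.start_succ e
  rcases le_or_gt (S e) q with hin | hout
  · rw [show q = S e + (q - S e) by omega, hc.window_start_add (by omega)]
    exact hend d _ t (by omega)
  · obtain ⟨ν, hν⟩ : ∃ ν, q + (t - ν) = S e := ⟨q + t - S e, by omega⟩
    calc window f (N d - t) t = window f (N d - t) ν + window f (N d - (t - ν)) (t - ν) := by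
          rw [window_split f (N d - t) (show ν ≤ t by omega)]
          congr 2
          omega
      _ ≤ window f 0 ν + window g q (t - ν) :=
          add_le_add (hzero _ _) (ih _ (by omega) (by omega) (by omega))
      _ = window g q t := by
          rw [window_split g q (show t - ν ≤ t by omega), Nat.sub_sub_self (show ν ≤ t by omega),
            hν, hc.window_start (show ν ≤ N e by omega), add_comm]

lemma window_le_window_start {d p t : ℕ} (hp : S d ≤ p) (hp' : p ≤ S (d + 1)) :
    window g p t ≤ window g (S d) t := by
  have hSd := hc.start_succ d
  obtain ⟨δ, hδ⟩ : ∃ δ, S d + δ = p := ⟨p - S d, by omega⟩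
  rcases le_or_gt t δ with hle | hlt
  · rw [hc.window_start (by omega)]
    exact hc.window_le_window_zero hzero hend hp (by omega)
  · calc window g p t = window g p (t - δ) + window g (p + (t - δ)) δ := by
          rw [window_split g p (show t - δ ≤ t by omega), Nat.sub_sub_self hlt.le]
      _ ≤ window g p (t - δ) + window f 0 δ :=
          Nat.add_le_add_left (hc.window_le_window_zero hzero hend (d := d) (by omega) (by omega)) _
      _ = window g (S d) t := by
          rw [window_split g (S d) hlt.le, hδ, hc.window_start (by omega), add_comm]

lemma window_end_le_window {d q t : ℕ} (hq : S d ≤ q + t) (hq' : q + t ≤ S (d + 1)) :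
    window g (S (d + 1) - t) t ≤ window g q t := by
  have hSd := hc.start_succ d
  obtain ⟨δ, hδ⟩ : ∃ δ, q + t + δ = S (d + 1) := ⟨S (d + 1) - (q + t), by omega⟩
  rcases le_or_gt t δ with hle | hlt
  · rw [show S (d + 1) - t = S d + (N d - t) by omega, hc.window_start_add (by omega)]
    exact hc.window_sub_le_window hzero hend (d := d) hq' (by omega)
  · calc window g (S (d + 1) - t) t = window g (q + δ) (t - δ) + window g (S d + (N d - δ)) δ := by
          rw [window_split g (S (d + 1) - t) (show t - δ ≤ t by omega), Nat.sub_sub_self hlt.le]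
          congr 2 <;> omega
      _ ≤ window g (q + δ) (t - δ) + window g q δ := by
          rw [hc.window_start_add (by omega)]
          exact Nat.add_le_add_left (hc.window_sub_le_window hzero hend (by omega) (by omega)) _
      _ = window g q t := by rw [add_comm, ← window_add, Nat.add_sub_cancel' hlt.le]

lemma antitone_window_start (t : ℕ) : Antitone (fun d => window g (S d) t) :=
  antitone_nat_of_succ_le fun d =>
    hc.window_le_window_start hzero hend (hc.start_mono d.le_succ) le_rfl

lemma window_end_le_window_end {e b t : ℕ} (heb : e ≤ b) (ht : t ≤ S (e + 1)) :
    window g (S (b + 1) - t) t ≤ window g (S (e + 1) - t) t := by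
  induction b, heb using Nat.le_induction with
  | base => exact le_rfl
  | succ b heb ih =>
    have := hc.start_mono (show e + 1 ≤ b + 1 by omega)
    have := hc.start_mono (show b + 1 ≤ b + 1 + 1 by omega)
    exact (hc.window_end_le_window hzero hend (by omega) (by omega)).trans ih

theorem startWindowsMax : StartWindowsMax g S := by
  intro a p t hp
  obtain ⟨e, hae, hep, hpe⟩ := hc.exists_block_ge hp
  exact (hc.window_le_window_start hzero hend hep hpe.le).trans
    (hc.antitone_window_start hzero hend t hae)

theorem endWindowsMin : EndWindowsMin g (fun d => S (d + 1)) := by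
  intro b q t hq
  dsimp only at hq ⊢
  rcases Nat.eq_zero_or_pos t with rfl | htpos
  · simp
  obtain ⟨e, heb, heq, hqe⟩ := hc.exists_block_le (show q + t - 1 < S (b + 1) by omega)
  exact (hc.window_end_le_window_end hzero hend heb (by omega)).trans
    (hc.window_end_le_window hzero hend (by omega) (by omega))

end IsConcatOfPrefixes

end Windows

section Support

variable {n : ℕ}

def SupportedOnFirst (k : ℕ) (u : Fin n →₀ ℕ) : Prop := ∀ i : Fin n, u i ≠ 0 → i.val + 1 ≤ k

instance (k : ℕ) : DecidablePred (SupportedOnFirst (n := n) k) := fun u =>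
  inferInstanceAs (Decidable (∀ i : Fin n, u i ≠ 0 → i.val + 1 ≤ k))

lemma supportedOnFirst_zero_iff {u : Fin n →₀ ℕ} : SupportedOnFirst 0 u ↔ u = 0 := by
  refine ⟨fun h => ?_, by rintro rfl i hi; simp at hi⟩
  ext i
  by_contra hi
  exact absurd (h i hi) (by omega)

lemma supportedOnFirst_of_fin_one (k : ℕ) (u : Fin 1 →₀ ℕ) : SupportedOnFirst (k + 1) u :=
  fun i _ => by omega

lemma supportedOnFirst_succ_iff_tail {k : ℕ} {z : Fin (n + 1) →₀ ℕ} :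
    SupportedOnFirst (k + 1) z ↔ SupportedOnFirst k (tail z) := by
  simp [SupportedOnFirst, Fin.forall_fin_succ, tail_apply]

end Support

section Indicator

variable (n : ℕ)

noncomputable def rankEquiv : (Fin (n + 1) →₀ ℕ) ≃ ℕ :=
  Equiv.ofBijective rank ⟨rank_injective, rank_surjective⟩

noncomputable def supportIndicator (k i : ℕ) : ℕ :=
  if SupportedOnFirst k ((rankEquiv n).symm i) then 1 else 0

variable {n}

lemma card_degLt_zero : #(degLt n 0) = 0 := by simp [card_eq_zero, eq_empty_iff_forall_notMem]

lemma antitone_supportIndicator_zero : Antitone (supportIndicator n 0) := by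
  have h0 : (rankEquiv n).symm 0 = 0 := (rankEquiv n).symm_apply_eq.mpr rank_zero.symm
  intro i j hij
  simp only [supportIndicator, supportedOnFirst_zero_iff, ← h0, (rankEquiv n).symm.injective.eq_iff]
  split_ifs <;> omega

lemma supportIndicator_fin_one (k : ℕ) : supportIndicator 0 (k + 1) = fun _ => 1 :=
  funext fun _ => if_pos (supportedOnFirst_of_fin_one k _)

lemma rank_single_zero (a : ℕ) : rank (single (0 : Fin (n + 1)) a) = #(degLt (n + 1) a) := by
  rw [rank_eq_card_degLt_add_rank_tail, mdeg_single, ← cons_zero_eq_single_zero, tail_cons,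
    rank_zero, add_zero]

lemma rank_single_last_add_one (b : ℕ) :
    rank (single (Fin.last n) b) + 1 = #(degLt (n + 1) (b + 1)) := by
  induction n with
  | zero =>
    have : degLt 0 (b + 1) = {0} := by
      ext v
      simp [Subsingleton.elim v 0, mdeg]
    rw [card_degLt_succ, this, card_singleton, Fin.last_zero, rank_single_zero]
  | succ n ih =>
    rw [rank_eq_card_degLt_add_rank_tail, mdeg_single, ← Fin.succ_last,
      ← cons_zero_single_eq_single_succ, tail_cons, add_assoc, ih, ← card_degLt_succ]

lemma rankEquiv_symm_card_degLt_add {d j : ℕ} (hj : j < #(degLt (n + 1) (d + 1))) :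
    (rankEquiv (n + 1)).symm (#(degLt (n + 2) d) + j) =
      cons (d - mdeg ((rankEquiv n).symm j)) ((rankEquiv n).symm j) := by
  set v := (rankEquiv n).symm j
  have hv : rank v = j := (rankEquiv n).apply_symm_apply j
  have hdv : mdeg v ≤ d := Nat.le_of_lt_succ (rank_lt_card_degLt_iff.mp (hv ▸ hj))
  rw [Equiv.symm_apply_eq]
  change _ = rank _
  rw [rank_eq_card_degLt_add_rank_tail, tail_cons, mdeg_cons, hv, Nat.sub_add_cancel hdv]

lemma isConcatOfPrefixes_supportIndicator (k : ℕ) :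
    IsConcatOfPrefixes (supportIndicator (n + 1) (k + 1)) (supportIndicator n k)
      (fun d => #(degLt (n + 1) (d + 1))) (fun d => #(degLt (n + 2) d)) where
  monotone _ _ h := card_le_card (degLt_mono (by omega))
  pos := card_pos.mpr ⟨0, by simp [mdeg]⟩
  start_zero := card_degLt_zero
  start_succ := card_degLt_succ
  apply_start_add d j hj := by
    simp only [supportIndicator, rankEquiv_symm_card_degLt_add hj, supportedOnFirst_succ_iff_tail,
      tail_cons]

theorem startWindowsMax_and_endWindowsMin_supportIndicator (n k : ℕ) :
    StartWindowsMax (supportIndicator n k) (fun d => #(degLt (n + 1) d)) ∧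
      EndWindowsMin (supportIndicator n k) (fun d => #(degLt (n + 1) (d + 1))) := by
  induction n generalizing k with
  | zero =>
    have hanti : Antitone (supportIndicator 0 k) := by
      cases k with
      | zero => exact antitone_supportIndicator_zero
      | succ k => rw [supportIndicator_fin_one]; exact antitone_const
    exact ⟨startWindowsMax_of_antitone hanti _, endWindowsMin_of_antitone hanti _⟩
  | succ n ih =>
    cases k with
    | zero =>
      exact ⟨startWindowsMax_of_antitone antitone_supportIndicator_zero _,
        endWindowsMin_of_antitone antitone_supportIndicator_zero _⟩
    | succ k =>
      obtain ⟨hstart, hend⟩ := ih k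
      have hzero : ∀ p t, window (supportIndicator n k) p t ≤ window (supportIndicator n k) 0 t :=
        fun p t => by simpa [card_degLt_zero] using hstart 0 p t
      have hc := isConcatOfPrefixes_supportIndicator (n := n) k
      exact ⟨hc.startWindowsMax hzero hend, hc.endWindowsMin hzero hend⟩

end Indicator

section Intervals

variable {n : ℕ} {M : Finset (Fin (n + 1) →₀ ℕ)}

lemma eq_map_range_of_mem_iff {p t : ℕ} (hM : ∀ v, v ∈ M ↔ p ≤ rank v ∧ rank v < p + t) :
    M = (range t).map ⟨fun i => (rankEquiv n).symm (p + i),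
      (rankEquiv n).symm.injective.comp (add_right_injective p)⟩ := by
  ext v
  simp only [hM, mem_map, mem_range, Function.Embedding.coeFn_mk, Equiv.symm_apply_eq]
  change _ ↔ ∃ i, i < t ∧ p + i = rank v
  exact ⟨fun h => ⟨rank v - p, by omega, by omega⟩, by rintro ⟨i, hi, h⟩; omega⟩

lemma mnum_eq_window_of_mem_iff {p t : ℕ} (hM : ∀ v, v ∈ M ↔ p ≤ rank v ∧ rank v < p + t)
    (k : ℕ) : mnum M k = window (supportIndicator n k) p t := by
  rw [eq_map_range_of_mem_iff hM, mnum, card_filter, sum_map]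
  rfl

lemma card_eq_of_oplex_interval {u w : Fin (n + 1) →₀ ℕ}
    (hM : ∀ v, v ∈ M ↔ OplexLe v u ∧ OplexLe w v) : #M = rank w + 1 - rank u := by
  have hM' : ∀ v, v ∈ M ↔ rank u ≤ rank v ∧ rank v < rank u + (rank w + 1 - rank u) := fun v => by
    rw [hM, oplexLe_iff_rank_le, oplexLe_iff_rank_le]
    omega
  rw [eq_map_range_of_mem_iff hM', card_map, card_range]

lemma mem_iff_of_oplex_interval {u w : Fin (n + 1) →₀ ℕ}
    (hM : ∀ v, v ∈ M ↔ OplexLe v u ∧ OplexLe w v) (v : Fin (n + 1) →₀ ℕ) :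
    v ∈ M ↔ rank u ≤ rank v ∧ rank v < rank u + #M := by
  rw [hM, oplexLe_iff_rank_le, oplexLe_iff_rank_le, card_eq_of_oplex_interval hM]
  omega

end Intervals

theorem stmt_11_general {n : ℕ}
    (u1 u2 : Fin (n + 1) →₀ ℕ)
    (a b : ℕ) (ha : a ≤ mdeg u1) (hb : mdeg u2 ≤ b)
    (A L R : Finset (Fin (n + 1) →₀ ℕ))
    (hA : ∀ v, v ∈ A ↔ (OplexLe v u1 ∧ OplexLe u2 v))
    (hL : ∃ w : Fin (n + 1) →₀ ℕ, ∀ v, v ∈ L ↔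
      (OplexLe v (Finsupp.single (0 : Fin (n + 1)) a) ∧ OplexLe w v))
    (hLcard : L.card = A.card)
    (hR : ∃ w : Fin (n + 1) →₀ ℕ, ∀ v, v ∈ R ↔
      (OplexLe v w ∧ OplexLe (Finsupp.single (Fin.last n) b) v))
    (hRcard : R.card = A.card) :
    ∀ k : ℕ, 1 ≤ k → k ≤ n + 1 →
      mnum L k ≥ mnum A k ∧ mnum A k ≥ mnum R k := by
  intro k _ _
  obtain ⟨w, hw⟩ := hL
  obtain ⟨w', hw'⟩ := hR
  obtain ⟨hstart, hend⟩ := startWindowsMax_and_endWindowsMin_supportIndicator n k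
  rw [mnum_eq_window_of_mem_iff (mem_iff_of_oplex_interval hA),
    mnum_eq_window_of_mem_iff (mem_iff_of_oplex_interval hw),
    mnum_eq_window_of_mem_iff (mem_iff_of_oplex_interval hw'), hLcard, hRcard, rank_single_zero]
  refine ⟨hstart a _ _ ((card_le_card (degLt_mono ha)).trans (card_degLt_le_rank u1)), ?_⟩
  rcases Nat.eq_zero_or_pos #A with hA0 | hApos
  · simp [hA0]
  have hAc := card_eq_of_oplex_interval hA
  have hRc := card_eq_of_oplex_interval hw'
  have hlast := rank_single_last_add_one (n := n) b
  have hu2 : rank u2 < #(degLt (n + 1) (b + 1)) := rank_lt_card_degLt_iff.mpr (by omega)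
  rw [show rank w' = #(degLt (n + 1) (b + 1)) - #A by omega]
  exact hend b (rank u1) #A (show rank u1 + #A ≤ #(degLt (n + 1) (b + 1)) by omega)

/-- Interval lemma: let `[u_1,u_2]` be an interval in the opposite degree lex order,
`a ≤ deg u_1`, `b ≥ deg u_2`, `L` the lower lex set of degree `a` and `R` the upper rev-lex
set of degree `b`, both of cardinality `#[u_1,u_2]`.  Then
`m_k(L) ≥ m_k([u_1,u_2]) ≥ m_k(R)` for every `k = 1,…,n`. -/
theorem stmt_11 {n : ℕ}
    (u1 u2 : Fin (n + 1) →₀ ℕ) (h12 : OplexLe u2 u1)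
    (a b : ℕ) (ha : a ≤ mdeg u1) (hb : mdeg u2 ≤ b)
    (A L R : Finset (Fin (n + 1) →₀ ℕ))
    (hA : ∀ v, v ∈ A ↔ (OplexLe v u1 ∧ OplexLe u2 v))
    (hL : ∃ w : Fin (n + 1) →₀ ℕ, ∀ v, v ∈ L ↔
      (OplexLe v (Finsupp.single (0 : Fin (n + 1)) a) ∧ OplexLe w v))
    (hLcard : L.card = A.card)
    (hR : ∃ w : Fin (n + 1) →₀ ℕ, ∀ v, v ∈ R ↔
      (OplexLe v w ∧ OplexLe (Finsupp.single (Fin.last n) b) v))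
    (hRcard : R.card = A.card) :
    ∀ k : ℕ, 1 ≤ k → k ≤ n + 1 →
      mnum L k ≥ mnum A k ∧ mnum A k ≥ mnum R k :=
  stmt_11_general u1 u2 a b ha hb A L R hA hL hLcard hR hRcard
end
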